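/- arXiv:math/0210023 — 2 statements merged into one kernel-verified Lean document; each statement's English description precedes it below -/
import Mathlib

section
/- Let τ and ν be subword patterns and let φ be the shuffle pattern τ-ℓ-ν (where ℓ is greater than every letter of τ and of ν, and the letters of τ and ν are mutually incomparable). Then for all k ≥ 1, in ℚ[[x]]: A_φ(x;k)·(1 − x·A_τ(x;k−1))·(1 − x·A_ν(x;k−1)) = A_φ(x;k−1) − x·A_τ(x;k−1)·A_ν(x;k−1). -/
/-!
Cut a word over `{0, …, K}` at the first occurrence of its largest letter `K`:
`w = w₁ K w₂`, with `w₁` a word over `{0, …, K - 1}`. Because `K` dominates every letter, `w`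
avoids `τ-ℓ-ν` iff either `w₁` avoids `τ` and `w₂` avoids `τ-ℓ-ν`, or `w₁` contains `τ` but avoids
`τ-ℓ-ν` and `w₂` has no occurrence of `ν` made of letters `< K`. Cutting the words of the last
kind in the same way shows that their series `B` satisfies `B = A_ν + x A_ν B`. Writing
`A_φ(K) = A_τ + C`, where `C` counts the words that contain `τ` but avoid `τ-ℓ-ν`, the first cut
gives `A_φ(K+1) = A_φ(K) + x A_τ A_φ(K+1) + x C B`; eliminating `B` and `C` gives the identity.
-/

/-- A word `σ : Fin n → Fin k` has an occurrence of the subword pattern `p : Fin m → Fin l`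
at position `i` if `i + m ≤ n` and the corresponding letters are order-isomorphic to `p`. -/
def OccursAt {m l n k : ℕ} (p : Fin m → Fin l) (σ : Fin n → Fin k) (i : ℕ) : Prop :=
  ∃ h : i + m ≤ n, ∀ a b : Fin m,
    (σ ⟨i + a, lt_of_lt_of_le (Nat.add_lt_add_left a.isLt i) h⟩ <
      σ ⟨i + b, lt_of_lt_of_le (Nat.add_lt_add_left b.isLt i) h⟩) ↔ p a < p b

/-- `σ` avoids the subword pattern `p`. -/
def AvoidsPat {m l n k : ℕ} (p : Fin m → Fin l) (σ : Fin n → Fin k) : Prop :=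
  ∀ i : ℕ, ¬ OccursAt p σ i

/-- `σ` contains the shuffle pattern `τ-ℓ-ν`: there are an occurrence of `τ` at `i`,
a later position `pp` carrying a letter larger than all letters of the two occurrences,
and a still later occurrence of `ν` at `q`. -/
def ContainsShuffle {m₁ r₁ m₂ r₂ n k : ℕ} (τ : Fin m₁ → Fin r₁) (ν : Fin m₂ → Fin r₂)
    (σ : Fin n → Fin k) : Prop :=
  ∃ (i pp q : ℕ) (hp : pp < n),
    i + m₁ ≤ pp ∧ pp < q ∧ q + m₂ ≤ n ∧ OccursAt τ σ i ∧ OccursAt ν σ q ∧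
      ∀ (r : ℕ) (hr : r < n),
        ((i ≤ r ∧ r < i + m₁) ∨ (q ≤ r ∧ r < q + m₂)) → σ ⟨r, hr⟩ < σ ⟨pp, hp⟩

/-- Generating function for the number of `k`-ary words avoiding the subword pattern `p`. -/
noncomputable def Apat {m l : ℕ} (p : Fin m → Fin l) (k : ℕ) : PowerSeries ℚ :=
  PowerSeries.mk fun n => (Nat.card {σ : Fin n → Fin k // AvoidsPat p σ} : ℚ)

/-- Generating function for the number of `k`-ary words avoiding the shuffle pattern
`τ-ℓ-ν`. -/
noncomputable def Ashuffle {m₁ r₁ m₂ r₂ : ℕ} (τ : Fin m₁ → Fin r₁) (ν : Fin m₂ → Fin r₂)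
    (k : ℕ) : PowerSeries ℚ :=
  PowerSeries.mk fun n => (Nat.card {σ : Fin n → Fin k // ¬ ContainsShuffle τ ν σ} : ℚ)

open PowerSeries Finset

/-- Words are lists of naturals, so that a word over `K + 1` letters can be cut at a letter `K`
into a `K`-ary and a `(K + 1)`-ary word. -/
abbrev Words (k n : ℕ) : Type := {l : List ℕ // l.length = n ∧ ∀ x ∈ l, x < k}

def wordsEquiv (k n : ℕ) : (Fin n → Fin k) ≃ Words k n where
  toFun σ := ⟨List.ofFn fun i => (σ i : ℕ), by simp, by simp [List.mem_ofFn]⟩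
  invFun w i := ⟨w.1[(i : ℕ)]'(by rw [w.2.1]; exact i.isLt), w.2.2 _ (List.getElem_mem _)⟩
  left_inv σ := by ext; simp
  right_inv w := by ext : 1; exact List.ext_getElem (by simp [w.2.1]) (by simp)

instance (k n : ℕ) : Finite (Words k n) := Finite.of_equiv _ (wordsEquiv k n)

theorem Nat.card_subtype_eq_card_and_add_card_and_not {α : Type*} [Finite α] (P Q : α → Prop) :
    Nat.card {x // P x} = Nat.card {x // P x ∧ Q x} + Nat.card {x // P x ∧ ¬ Q x} := by
  classical
  rw [Nat.card_congr (Equiv.sumCompl fun x : {x // P x} => Q x).symm,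
    Nat.card_sum, Nat.card_congr (Equiv.subtypeSubtypeEquivSubtypeInter P Q),
    Nat.card_congr (Equiv.subtypeSubtypeEquivSubtypeInter P fun x => ¬ Q x)]

noncomputable def wordsGf (k : ℕ) (P : List ℕ → Prop) : PowerSeries ℚ :=
  mk fun n => Nat.card {w : Words k n // P w.1}

noncomputable def pairsGf (k k' : ℕ) (Q : List ℕ → List ℕ → Prop) : PowerSeries ℚ :=
  mk fun n => ∑ p ∈ antidiagonal n, (Nat.card {q : Words k p.1 × Words k' p.2 // Q q.1.1 q.2.1} : ℚ)

theorem wordsGf_congr {k : ℕ} {P Q : List ℕ → Prop} (h : ∀ l, (∀ x ∈ l, x < k) → (P l ↔ Q l)) :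
    wordsGf k P = wordsGf k Q := by
  ext n
  simp only [wordsGf, coeff_mk]
  rw [Nat.card_congr (Equiv.subtypeEquivRight fun w : Words k n => h w.1 w.2.2)]

theorem wordsGf_eq_and_add_and_not (k : ℕ) (P Q : List ℕ → Prop) :
    wordsGf k P = wordsGf k (fun l => P l ∧ Q l) + wordsGf k (fun l => P l ∧ ¬ Q l) := by
  ext n
  simp only [wordsGf, coeff_mk, map_add]
  exact_mod_cast Nat.card_subtype_eq_card_and_add_card_and_not _ _

theorem pairsGf_eq_and_add_and_not (k k' : ℕ) (Q : List ℕ → List ℕ → Prop) (R : List ℕ → Prop) :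
    pairsGf k k' Q =
      pairsGf k k' (fun l₁ l₂ => Q l₁ l₂ ∧ R l₁) +
        pairsGf k k' (fun l₁ l₂ => Q l₁ l₂ ∧ ¬ R l₁) := by
  ext n
  simp only [pairsGf, coeff_mk, map_add, ← sum_add_distrib]
  refine sum_congr rfl fun p _ => ?_
  exact_mod_cast Nat.card_subtype_eq_card_and_add_card_and_not _ _

theorem pairsGf_eq_mul {k k' : ℕ} {Q : List ℕ → List ℕ → Prop} {R S : List ℕ → Prop}
    (h : ∀ l₁ l₂, (∀ x ∈ l₁, x < k) → (∀ x ∈ l₂, x < k') → (Q l₁ l₂ ↔ R l₁ ∧ S l₂)) :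
    pairsGf k k' Q = wordsGf k R * wordsGf k' S := by
  ext n
  simp only [pairsGf, wordsGf, coeff_mk, coeff_mul]
  refine sum_congr rfl fun p _ => ?_
  rw [Nat.card_congr ((Equiv.subtypeEquivRight fun q : Words k p.1 × Words k' p.2 =>
    h _ _ q.1.2.2 q.2.2.2).trans
    (Equiv.subtypeProdEquivProd (p := fun w : Words k p.1 => R w.1)
      (q := fun w : Words k' p.2 => S w.1))), Nat.card_prod, Nat.cast_mul]

theorem idxOf_append_cons_of_notMem {K : ℕ} {l₁ l₂ : List ℕ} (h : K ∉ l₁) :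
    (l₁ ++ K :: l₂).idxOf K = l₁.length := by
  rw [List.idxOf_append_of_notMem h, List.idxOf_cons_self, add_zero]

theorem card_words_succ (K n : ℕ) (P : List ℕ → Prop) :
    Nat.card {w : Words (K + 1) n // P w.1} =
      Nat.card {w : Words K n // P w.1} + Nat.card {w : Words (K + 1) n // P w.1 ∧ K ∈ w.1} := by
  rw [Nat.card_subtype_eq_card_and_add_card_and_not _ fun w : Words (K + 1) n => K ∈ w.1,
    add_comm]
  congr 1
  exact Nat.card_congr
    { toFun w := ⟨⟨w.1.1, w.1.2.1, fun x hx =>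
        (Nat.lt_succ_iff.1 (w.1.2.2 x hx)).lt_of_ne fun h => w.2.2 (h ▸ hx)⟩, w.2.1⟩
      invFun w := ⟨⟨w.1.1, w.1.2.1, fun x hx => (w.1.2.2 x hx).trans (Nat.lt_add_one _)⟩,
        w.2, fun h => (w.1.2.2 K h).false⟩
      left_inv _ := rfl
      right_inv _ := rfl }

theorem append_cons_words {K i j : ℕ} (w₁ : Words K i) (w₂ : Words (K + 1) j) :
    (w₁.1 ++ K :: w₂.1).length = i + j + 1 ∧ (∀ x ∈ w₁.1 ++ K :: w₂.1, x < K + 1) ∧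
      (w₁.1 ++ K :: w₂.1).idxOf K = i := by
  refine ⟨by simp [w₁.2.1, w₂.2.1]; omega, ?_, ?_⟩
  · simp only [List.mem_append, List.mem_cons]
    rintro x (hx | rfl | hx)
    exacts [(w₁.2.2 x hx).trans (Nat.lt_add_one _), Nat.lt_add_one _, w₂.2.2 x hx]
  · rw [idxOf_append_cons_of_notMem fun h => (w₁.2.2 K h).false, w₁.2.1]

theorem card_words_mem_eq_sum (K m : ℕ) (P : List ℕ → Prop) :
    Nat.card {w : Words (K + 1) (m + 1) // P w.1 ∧ K ∈ w.1} =
      ∑ p ∈ antidiagonal m,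
        Nat.card {q : Words K p.1 × Words (K + 1) p.2 // P (q.1.1 ++ K :: q.2.1)} := by
  let f (w : {w : Words (K + 1) (m + 1) // P w.1 ∧ K ∈ w.1}) : antidiagonal m :=
    ⟨(w.1.1.idxOf K, m - w.1.1.idxOf K), mem_antidiagonal.2 <| by
      have := List.idxOf_lt_length_of_mem w.2.2
      rw [w.1.2.1] at this
      omega⟩
  rw [← Nat.card_congr (Equiv.sigmaFiberEquiv f), Nat.card_sigma,
    ← Finset.sum_coe_sort (antidiagonal m)]
  refine Fintype.sum_congr _ _ fun p => ?_
  have hp := mem_antidiagonal.1 p.2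
  have hcut (q : Words K p.1.1 × Words (K + 1) p.1.2) := append_cons_words q.1 q.2
  refine (Nat.card_congr (Equiv.ofBijective (fun q =>
    ⟨⟨⟨_, (hcut q.1).1.trans (by omega), (hcut q.1).2.1⟩, q.2, by simp⟩,
      Subtype.ext (Prod.ext (hcut q.1).2.2 (by simp only [f, (hcut q.1).2.2]; omega))⟩)
    ⟨?_, ?_⟩)).symm
  · intro q q' h
    obtain ⟨h₁, h₂⟩ := List.append_inj (congrArg (fun w => w.1.1.1) h)
      (q.1.1.2.1.trans q'.1.1.2.1.symm)
    exact Subtype.ext (Prod.ext (Subtype.ext h₁) (Subtype.ext (List.cons_inj_right K |>.1 h₂)))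
  · rintro ⟨⟨⟨l, hlen, hk⟩, hP, hK⟩, hf⟩
    obtain ⟨l₁, l₂, hl₁, rfl, -⟩ := List.exists_erase_eq hK
    have h₁ : l₁.length = p.1.1 := by
      rw [← idxOf_append_cons_of_notMem hl₁]
      exact congrArg (fun p => p.1.1) hf
    have h₂ : l₂.length = p.1.2 := by simp at hlen; omega
    refine ⟨⟨(⟨l₁, h₁, fun x hx => ?_⟩, ⟨l₂, h₂, fun x hx => hk x (by simp [hx])⟩), hP⟩, rfl⟩
    exact (Nat.lt_succ_iff.1 (hk x (by simp [hx]))).lt_of_ne fun h => hl₁ (h ▸ hx)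

theorem wordsGf_succ (K : ℕ) (P : List ℕ → Prop) :
    wordsGf (K + 1) P = wordsGf K P + X * pairsGf K (K + 1) (fun l₁ l₂ => P (l₁ ++ K :: l₂)) := by
  ext n
  simp only [wordsGf, coeff_mk, map_add, card_words_succ, Nat.cast_add]
  congr 1
  cases n with
  | zero =>
    rw [coeff_zero_X_mul, Nat.cast_eq_zero, Nat.card_eq_zero]
    exact Or.inl ⟨fun w => by simpa [List.length_eq_zero_iff.1 w.1.2.1] using w.2.2⟩
  | succ m => rw [coeff_succ_X_mul, pairsGf, coeff_mk, card_words_mem_eq_sum, Nat.cast_sum]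

section ListPatterns

variable {m r : ℕ} (p : Fin m → Fin r)

def ListOccursAt (l : List ℕ) (i : ℕ) : Prop :=
  i + m ≤ l.length ∧ ∀ a b : Fin m, (l.getD (i + a) 0 < l.getD (i + b) 0 ↔ p a < p b)

/-- On `k`-ary words, an occurrence below `k` is just an occurrence. -/
def ListOccursBelow (c : ℕ) (l : List ℕ) (i : ℕ) : Prop :=
  ListOccursAt p l i ∧ ∀ a : Fin m, l.getD (i + a) 0 < c

def ListAvoidsBelow (c : ℕ) (l : List ℕ) : Prop := ∀ i, ¬ ListOccursBelow p c l i

variable {p} {c K i : ℕ} {l₁ l₂ : List ℕ}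

theorem ListOccursBelow.mono {l : List ℕ} (h : ListOccursBelow p c l i) {c' : ℕ} (hc : c ≤ c') :
    ListOccursBelow p c' l i :=
  ⟨h.1, fun a => (h.2 a).trans_le hc⟩

theorem listOccursBelow_congr {l l' : List ℕ} {i' : ℕ}
    (hlen : i + m ≤ l.length ↔ i' + m ≤ l'.length)
    (h : ∀ a : Fin m, l.getD (i + a) 0 = l'.getD (i' + a) 0) :
    ListOccursBelow p c l i ↔ ListOccursBelow p c l' i' := by
  simp only [ListOccursBelow, ListOccursAt, h, hlen]

theorem getD_le_of_forall_le {l : List ℕ} (h : ∀ x ∈ l, x ≤ K) (j : ℕ) : l.getD j 0 ≤ K := by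
  rcases lt_or_ge j l.length with hj | hj
  · rw [List.getD_eq_getElem _ _ hj]
    exact h _ (List.getElem_mem hj)
  · rw [List.getD_eq_default _ _ hj]
    exact Nat.zero_le K

theorem getD_append_cons_length_add (j : ℕ) :
    (l₁ ++ K :: l₂).getD (l₁.length + 1 + j) 0 = l₂.getD j 0 := by
  rw [List.getD_append_right _ _ _ _ (by omega),
    show l₁.length + 1 + j - l₁.length = j + 1 by omega]
  rfl

theorem listOccursBelow_append_cons_left (h : i + m ≤ l₁.length) :
    ListOccursBelow p c (l₁ ++ K :: l₂) i ↔ ListOccursBelow p c l₁ i :=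
  listOccursBelow_congr (by simp; omega) fun a => List.getD_append _ _ _ _ (by omega)

theorem listOccursBelow_append_cons_right :
    ListOccursBelow p c (l₁ ++ K :: l₂) (l₁.length + 1 + i) ↔ ListOccursBelow p c l₂ i :=
  listOccursBelow_congr (by simp; omega) fun a => by
    rw [add_assoc (l₁.length + 1), getD_append_cons_length_add]

theorem ListOccursBelow.le_length_or_length_lt (h : ListOccursBelow p c (l₁ ++ K :: l₂) i)
    (hc : c ≤ K) : i + m ≤ l₁.length ∨ l₁.length < i := by
  by_contra! hmid
  have := h.2 ⟨l₁.length - i, by omega⟩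
  rw [show i + (l₁.length - i) = l₁.length by omega, List.getD_append_right _ _ _ _ le_rfl,
    Nat.sub_self] at this
  exact absurd (this.trans_le hc) (lt_irrefl K)

theorem listAvoidsBelow_append_cons :
    ListAvoidsBelow p K (l₁ ++ K :: l₂) ↔ ListAvoidsBelow p K l₁ ∧ ListAvoidsBelow p K l₂ := by
  refine ⟨fun h => ⟨fun i hi => h i ((listOccursBelow_append_cons_left hi.1.1).2 hi),
    fun i hi => h _ (listOccursBelow_append_cons_right.2 hi)⟩, fun ⟨h₁, h₂⟩ i hi => ?_⟩
  rcases hi.le_length_or_length_lt le_rfl with hleft | hright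
  · exact h₁ i ((listOccursBelow_append_cons_left hleft).1 hi)
  · obtain ⟨i, rfl⟩ := Nat.exists_eq_add_of_le hright
    exact h₂ i (listOccursBelow_append_cons_right.1 hi)

end ListPatterns

section ListShuffle

variable {m₁ r₁ m₂ r₂ : ℕ} (τ : Fin m₁ → Fin r₁) (ν : Fin m₂ → Fin r₂)

def ListContainsShuffle (l : List ℕ) : Prop :=
  ∃ i pp q, i + m₁ ≤ pp ∧ pp < q ∧
    ListOccursBelow τ (l.getD pp 0) l i ∧ ListOccursBelow ν (l.getD pp 0) l q

variable {τ ν} {K : ℕ} {l l₁ l₂ : List ℕ}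

theorem ListContainsShuffle.not_listAvoidsBelow_left (hl : ∀ x ∈ l, x ≤ K)
    (h : ListContainsShuffle τ ν l) : ¬ ListAvoidsBelow τ K l := by
  obtain ⟨i, pp, -, -, -, hτ, -⟩ := h
  exact fun hav => hav i (hτ.mono (getD_le_of_forall_le hl pp))

theorem ListContainsShuffle.not_listAvoidsBelow_right (hl : ∀ x ∈ l, x ≤ K)
    (h : ListContainsShuffle τ ν l) : ¬ ListAvoidsBelow ν K l := by
  obtain ⟨-, pp, q, -, -, -, hν⟩ := h
  exact fun hav => hav q (hν.mono (getD_le_of_forall_le hl pp))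

theorem ListContainsShuffle.of_append_cons (h₁ : ∀ x ∈ l₁, x ≤ K) (h₂ : ∀ x ∈ l₂, x ≤ K)
    (h : ListContainsShuffle τ ν (l₁ ++ K :: l₂)) :
    ListContainsShuffle τ ν l₁ ∨ ListContainsShuffle τ ν l₂ ∨
      (¬ ListAvoidsBelow τ K l₁ ∧ ¬ ListAvoidsBelow ν K l₂) := by
  obtain ⟨i, pp, q, hip, hpq, hτ, hν⟩ := h
  have hc : (l₁ ++ K :: l₂).getD pp 0 ≤ K := getD_le_of_forall_le (by
    simp only [List.mem_append, List.mem_cons]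
    rintro x (hx | rfl | hx)
    exacts [h₁ x hx, le_rfl, h₂ x hx]) pp
  rcases hτ.le_length_or_length_lt hc with hτ₁ | hτ₂
  · rcases hν.le_length_or_length_lt hc with hν₁ | hν₂
    · have hpp : pp < l₁.length := by omega
      rw [List.getD_append _ _ _ _ hpp] at hτ hν
      exact Or.inl ⟨i, pp, q, hip, hpq, (listOccursBelow_append_cons_left hτ₁).1 hτ,
        (listOccursBelow_append_cons_left hν₁).1 hν⟩
    · obtain ⟨q, rfl⟩ := Nat.exists_eq_add_of_le hν₂
      exact Or.inr <| Or.inr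
        ⟨fun hav => hav i ((listOccursBelow_append_cons_left hτ₁).1 (hτ.mono hc)),
        fun hav => hav q (listOccursBelow_append_cons_right.1 (hν.mono hc))⟩
  · obtain ⟨i, rfl⟩ := Nat.exists_eq_add_of_le hτ₂
    obtain ⟨pp, rfl⟩ := Nat.exists_eq_add_of_le (show l₁.length + 1 ≤ pp by omega)
    obtain ⟨q, rfl⟩ := Nat.exists_eq_add_of_le (show l₁.length + 1 ≤ q by omega)
    rw [getD_append_cons_length_add] at hτ hν
    exact Or.inr <| Or.inl ⟨i, pp, q, by omega, by omega, listOccursBelow_append_cons_right.1 hτ,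
      listOccursBelow_append_cons_right.1 hν⟩

theorem listContainsShuffle_append_cons_iff (h₁ : ∀ x ∈ l₁, x ≤ K) (h₂ : ∀ x ∈ l₂, x ≤ K) :
    ListContainsShuffle τ ν (l₁ ++ K :: l₂) ↔
      ListContainsShuffle τ ν l₁ ∨ ListContainsShuffle τ ν l₂ ∨
        (¬ ListAvoidsBelow τ K l₁ ∧ ¬ ListAvoidsBelow ν K l₂) := by
  refine ⟨ListContainsShuffle.of_append_cons h₁ h₂, ?_⟩
  rintro (⟨i, pp, q, hip, hpq, hτ, hν⟩ | ⟨i, pp, q, hip, hpq, hτ, hν⟩ | ⟨hτ, hν⟩)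
  · have hpp : pp < l₁.length := by have := hν.1.1; omega
    refine ⟨i, pp, q, hip, hpq, ?_, ?_⟩ <;> rw [List.getD_append _ _ _ _ hpp]
    exacts [(listOccursBelow_append_cons_left (by omega)).2 hτ,
      (listOccursBelow_append_cons_left hν.1.1).2 hν]
  · refine ⟨l₁.length + 1 + i, l₁.length + 1 + pp, l₁.length + 1 + q, by omega, by omega,
      ?_, ?_⟩ <;>
      rw [getD_append_cons_length_add]
    exacts [listOccursBelow_append_cons_right.2 hτ, listOccursBelow_append_cons_right.2 hν]
  · obtain ⟨i, hi⟩ := not_forall_not.1 hτ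
    obtain ⟨q, hq⟩ := not_forall_not.1 hν
    refine ⟨i, l₁.length, l₁.length + 1 + q, hi.1.1, by omega, ?_, ?_⟩ <;>
      rw [List.getD_append_right _ _ _ _ le_rfl, Nat.sub_self]
    exacts [(listOccursBelow_append_cons_left hi.1.1).2 hi, listOccursBelow_append_cons_right.2 hq]

end ListShuffle

section Transfer

variable {n k : ℕ}

theorem wordsEquiv_getD (σ : Fin n → Fin k) {j : ℕ} (hj : j < n) :
    (wordsEquiv k n σ).1.getD j 0 = σ ⟨j, hj⟩ := by
  simp [wordsEquiv, hj]

theorem occursAt_iff_listOccursAt {m r : ℕ} (p : Fin m → Fin r) (σ : Fin n → Fin k) (i : ℕ) :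
    OccursAt p σ i ↔ ListOccursAt p (wordsEquiv k n σ).1 i := by
  rw [ListOccursAt, (wordsEquiv k n σ).2.1]
  constructor
  · rintro ⟨h, hp⟩
    refine ⟨h, fun a b => ?_⟩
    rw [wordsEquiv_getD σ (by omega), wordsEquiv_getD σ (by omega), ← Fin.lt_def]
    exact hp a b
  · rintro ⟨h, hp⟩
    refine ⟨h, fun a b => ?_⟩
    rw [Fin.lt_def, ← wordsEquiv_getD σ, ← wordsEquiv_getD σ]
    exact hp a b

theorem avoidsPat_iff_listAvoidsBelow {m r : ℕ} (p : Fin m → Fin r) (σ : Fin n → Fin k) :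
    AvoidsPat p σ ↔ ListAvoidsBelow p k (wordsEquiv k n σ).1 := by
  refine forall_congr' fun i =>
    not_congr ⟨fun h => ?_, fun h => (occursAt_iff_listOccursAt p σ i).2 h.1⟩
  refine ⟨(occursAt_iff_listOccursAt p σ i).1 h, fun a => ?_⟩
  rw [wordsEquiv_getD σ (by have := h.1; omega)]
  exact (σ _).isLt

theorem containsShuffle_iff_listContainsShuffle {m₁ r₁ m₂ r₂ : ℕ} (τ : Fin m₁ → Fin r₁)
    (ν : Fin m₂ → Fin r₂) (σ : Fin n → Fin k) :
    ContainsShuffle τ ν σ ↔ ListContainsShuffle τ ν (wordsEquiv k n σ).1 := by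
  simp only [ContainsShuffle, ListContainsShuffle, ListOccursBelow, ← occursAt_iff_listOccursAt]
  constructor
  · rintro ⟨i, pp, q, hp, hip, hpq, hqn, hτ, hν, hmax⟩
    refine ⟨i, pp, q, hip, hpq, ⟨hτ, fun a => ?_⟩, ⟨hν, fun a => ?_⟩⟩ <;>
      rw [wordsEquiv_getD σ hp, wordsEquiv_getD σ (by omega), ← Fin.lt_def]
    exacts [hmax _ _ (Or.inl ⟨by omega, by omega⟩), hmax _ _ (Or.inr ⟨by omega, by omega⟩)]
  · rintro ⟨i, pp, q, hip, hpq, ⟨hτ, hτc⟩, ⟨hν, hνc⟩⟩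
    have hqn := hν.1
    refine ⟨i, pp, q, by omega, hip, hpq, hqn, hτ, hν, fun j hj hw => ?_⟩
    have hp : pp < n := by omega
    rw [Fin.lt_def, ← wordsEquiv_getD σ hj, ← wordsEquiv_getD σ hp]
    rcases hw with ⟨hij, hji⟩ | ⟨hqj, hjq⟩
    · simpa [Nat.add_sub_cancel' hij] using hτc ⟨j - i, by omega⟩
    · simpa [Nat.add_sub_cancel' hqj] using hνc ⟨j - q, by omega⟩

end Transfer

theorem apat_eq_wordsGf {m r : ℕ} (p : Fin m → Fin r) (k : ℕ) :
    Apat p k = wordsGf k (ListAvoidsBelow p k) := by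
  ext n
  simp only [Apat, wordsGf, coeff_mk]
  exact_mod_cast Nat.card_congr
    ((wordsEquiv k n).subtypeEquiv (q := fun w => ListAvoidsBelow p k w.1)
      fun σ => avoidsPat_iff_listAvoidsBelow p σ)

theorem ashuffle_eq_wordsGf {m₁ r₁ m₂ r₂ : ℕ} (τ : Fin m₁ → Fin r₁) (ν : Fin m₂ → Fin r₂) (k : ℕ) :
    Ashuffle τ ν k = wordsGf k (fun l => ¬ ListContainsShuffle τ ν l) := by
  ext n
  simp only [Ashuffle, wordsGf, coeff_mk]
  exact_mod_cast Nat.card_congr ((wordsEquiv k n).subtypeEquiv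
    (q := fun w => ¬ ListContainsShuffle τ ν w.1)
    fun σ => not_congr (containsShuffle_iff_listContainsShuffle τ ν σ))

section Recursions

variable {m₁ r₁ m₂ r₂ : ℕ} (τ : Fin m₁ → Fin r₁) (ν : Fin m₂ → Fin r₂) (K : ℕ)

theorem wordsGf_listAvoidsBelow_succ :
    wordsGf (K + 1) (ListAvoidsBelow ν K) = wordsGf K (ListAvoidsBelow ν K) +
      X * wordsGf K (ListAvoidsBelow ν K) * wordsGf (K + 1) (ListAvoidsBelow ν K) := by
  refine (wordsGf_succ K _).trans ?_
  rw [mul_assoc, pairsGf_eq_mul (R := ListAvoidsBelow ν K) (S := ListAvoidsBelow ν K)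
    fun _ _ _ _ => listAvoidsBelow_append_cons]

theorem wordsGf_not_listContainsShuffle_succ :
    wordsGf (K + 1) (fun l => ¬ ListContainsShuffle τ ν l) =
      wordsGf K (fun l => ¬ ListContainsShuffle τ ν l) +
      X * wordsGf K (ListAvoidsBelow τ K) * wordsGf (K + 1) (fun l => ¬ ListContainsShuffle τ ν l) +
      X * wordsGf K (fun l => ¬ ListContainsShuffle τ ν l ∧ ¬ ListAvoidsBelow τ K l) *
        wordsGf (K + 1) (ListAvoidsBelow ν K) := by
  have hsplit (l₁ l₂ : List ℕ) (h₁ : ∀ x ∈ l₁, x < K) (h₂ : ∀ x ∈ l₂, x < K + 1) :=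
    listContainsShuffle_append_cons_iff (τ := τ) (ν := ν) (fun x hx => (h₁ x hx).le)
      fun x hx => Nat.lt_succ_iff.1 (h₂ x hx)
  have hτ (l₁ : List ℕ) (h₁ : ∀ x ∈ l₁, x < K) (hc : ListContainsShuffle τ ν l₁) :=
    hc.not_listAvoidsBelow_left fun x hx => (h₁ x hx).le
  have hν (l₂ : List ℕ) (h₂ : ∀ x ∈ l₂, x < K + 1) (hc : ListContainsShuffle τ ν l₂) :=
    hc.not_listAvoidsBelow_right fun x hx => Nat.lt_succ_iff.1 (h₂ x hx)
  refine (wordsGf_succ K _).trans ?_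
  rw [pairsGf_eq_and_add_and_not _ _ _ (ListAvoidsBelow τ K), mul_add, add_assoc,
    pairsGf_eq_mul (R := ListAvoidsBelow τ K) (S := fun l => ¬ ListContainsShuffle τ ν l)
      fun l₁ l₂ h₁ h₂ => by rw [hsplit l₁ l₂ h₁ h₂]; have := hτ l₁ h₁; tauto,
    pairsGf_eq_mul (R := fun l => ¬ ListContainsShuffle τ ν l ∧ ¬ ListAvoidsBelow τ K l)
      (S := ListAvoidsBelow ν K)
      fun l₁ l₂ h₁ h₂ => by rw [hsplit l₁ l₂ h₁ h₂]; have := hν l₂ h₂; tauto,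
    mul_assoc, mul_assoc]

theorem wordsGf_not_listContainsShuffle_eq_add :
    wordsGf K (fun l => ¬ ListContainsShuffle τ ν l) = wordsGf K (ListAvoidsBelow τ K) +
      wordsGf K (fun l => ¬ ListContainsShuffle τ ν l ∧ ¬ ListAvoidsBelow τ K l) := by
  rw [wordsGf_eq_and_add_and_not K _ (ListAvoidsBelow τ K)]
  congr 1
  exact wordsGf_congr fun l hl =>
    ⟨And.right, fun h => ⟨fun hc => hc.not_listAvoidsBelow_left (fun x hx => (hl x hx).le) h, h⟩⟩

end Recursions

theorem stmt5 (m₁ r₁ m₂ r₂ : ℕ) (τ : Fin m₁ → Fin r₁) (ν : Fin m₂ → Fin r₂)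
    (k : ℕ) (hk : 1 ≤ k) :
    Ashuffle τ ν k * (1 - PowerSeries.X * Apat τ (k - 1)) *
        (1 - PowerSeries.X * Apat ν (k - 1)) =
      Ashuffle τ ν (k - 1) - PowerSeries.X * Apat τ (k - 1) * Apat ν (k - 1) := by
  obtain ⟨K, rfl⟩ : ∃ K, k = K + 1 := ⟨k - 1, by omega⟩
  rw [Nat.add_sub_cancel, ashuffle_eq_wordsGf, ashuffle_eq_wordsGf, apat_eq_wordsGf,
    apat_eq_wordsGf]
  linear_combination (1 - X * wordsGf K (ListAvoidsBelow ν K)) *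
      wordsGf_not_listContainsShuffle_succ τ ν K +
    X * wordsGf K (fun l => ¬ ListContainsShuffle τ ν l ∧ ¬ ListAvoidsBelow τ K l) *
      wordsGf_listAvoidsBelow_succ ν K -
    X * wordsGf K (ListAvoidsBelow ν K) * wordsGf_not_listContainsShuffle_eq_add τ ν K
end

section
/- For all n ≥ 1 and k ≥ 1, the number of words σ : Fin n → Fin k avoiding the multi-pattern 1-1'2' (i.e., containing no indices i < j with j + 1 < n such that σ(j) < σ(j+1); equivalently, σ(1) ≥ σ(2) ≥ … ≥ σ(n−1), the word with its first letter removed is weakly decreasing) equals k·C(n + k − 2, n − 1), where C denotes the binomial coefficient. -/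
/-!
A word avoids `1-1'2'` exactly when it has no ascent after its first letter, i.e. when its tail
`σ(1) ≥ … ≥ σ(n-1)` is weakly decreasing. The first letter is free (`k` choices), and a weakly
decreasing word of length `n - 1` is the same thing as the multiset of its letters, so by stars
and bars there are `C(k + n - 2, n - 1)` of them.
-/

open Function

theorem Sym.bijective_ofFn_of_monotone (α : Type*) [LinearOrder α] (m : ℕ) :
    Bijective fun f : {f : Fin m → α // Monotone f} =>
      (Sym.mk (List.ofFn f.1 : Multiset α) (by simp) : Sym α m) := by
  constructor
  · rintro ⟨f, hf⟩ ⟨g, hg⟩ hfg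
    have hperm : (List.ofFn f).Perm (List.ofFn g) :=
      Multiset.coe_eq_coe.mp (congrArg Subtype.val hfg)
    exact Subtype.ext <| List.ofFn_injective <|
      hperm.eq_of_sortedLE (List.sortedLE_ofFn_iff.mpr hf) (List.sortedLE_ofFn_iff.mpr hg)
  · rintro ⟨s, hs⟩
    have hlen : (s.sort (· ≤ ·)).length = m := by simp [hs]
    obtain ⟨f, hf⟩ : ∃ f : Fin m → α, List.ofFn f = s.sort (· ≤ ·) := by
      rw [← hlen]
      exact ⟨_, List.ofFn_getElem⟩
    refine ⟨⟨f, ?_⟩, Subtype.ext ?_⟩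
    · rw [← List.sortedLE_ofFn_iff, hf]
      exact (Multiset.pairwise_sort s _).sortedLE
    · simp [hf]

theorem Nat.card_monotone_fin (α : Type*) [LinearOrder α] [Fintype α] (m : ℕ) :
    Nat.card {f : Fin m → α // Monotone f} = (Fintype.card α + m - 1).choose m := by
  rw [Nat.card_eq_of_bijective _ (Sym.bijective_ofFn_of_monotone α m), Nat.card_eq_fintype_card,
    Sym.card_sym_eq_choose]

theorem Nat.card_antitone_fin (α : Type*) [LinearOrder α] [Fintype α] (m : ℕ) :
    Nat.card {f : Fin m → α // Antitone f} = (Fintype.card α + m - 1).choose m :=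
  Nat.card_monotone_fin αᵒᵈ m

theorem Fin.antitone_iff_forall_succ_le {m : ℕ} {α : Type*} [Preorder α] (f : Fin m → α) :
    Antitone f ↔ ∀ (i : ℕ) (h : i + 1 < m), f ⟨i + 1, h⟩ ≤ f ⟨i, by omega⟩ := by
  cases m with
  | zero => simp [Antitone]
  | succ m =>
    rw [Fin.antitone_iff_succ_le]
    exact ⟨fun h i hi => h ⟨i, by omega⟩, fun h i => h i (by omega)⟩

theorem not_exists_ascent_iff_antitone_tail {m : ℕ} {α : Type*} [LinearOrder α]
    (σ : Fin (m + 1) → α) :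
    (¬ ∃ (i j : ℕ) (h : j + 1 < m + 1), i < j ∧ σ ⟨j, Nat.lt_of_succ_lt h⟩ < σ ⟨j + 1, h⟩) ↔
      Antitone (Fin.tail σ) := by
  rw [Fin.antitone_iff_forall_succ_le]
  simp only [not_exists, not_and, not_lt]
  constructor
  · intro h t ht
    exact h 0 (t + 1) (by omega) (by omega)
  · rintro h i (_ | t) hj hij
    · omega
    · exact h t (by omega)

def Fin.ascentFreeEquivProdAntitone (α : Type*) [LinearOrder α] (m : ℕ) :
    {σ : Fin (m + 1) → α //
        ¬ ∃ (i j : ℕ) (h : j + 1 < m + 1), i < j ∧ σ ⟨j, Nat.lt_of_succ_lt h⟩ < σ ⟨j + 1, h⟩} ≃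
      α × {f : Fin m → α // Antitone f} where
  toFun σ := (σ.1 0, ⟨Fin.tail σ.1, (not_exists_ascent_iff_antitone_tail σ.1).mp σ.2⟩)
  invFun p := ⟨Fin.cons p.1 p.2.1, (not_exists_ascent_iff_antitone_tail _).mpr p.2.2⟩
  left_inv σ := by simp
  right_inv p := by simp

theorem stmt8_general (n k : ℕ) (hn : 1 ≤ n) :
    Nat.card {σ : Fin n → Fin k //
        ¬ ∃ (i j : ℕ) (h : j + 1 < n),
            i < j ∧ σ ⟨j, Nat.lt_of_succ_lt h⟩ < σ ⟨j + 1, h⟩} =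
      k * Nat.choose (n + k - 2) (n - 1) := by
  obtain ⟨m, rfl⟩ : ∃ m, n = m + 1 := ⟨n - 1, by omega⟩
  rw [Nat.card_congr (Fin.ascentFreeEquivProdAntitone (Fin k) m), Nat.card_prod,
    Nat.card_antitone_fin, Nat.card_eq_fintype_card, Fintype.card_fin,
    show m + 1 + k - 2 = k + m - 1 by omega, Nat.add_sub_cancel]

theorem stmt8 (n k : ℕ) (hn : 1 ≤ n) (hk : 1 ≤ k) :
    Nat.card {σ : Fin n → Fin k //
        ¬ ∃ (i j : ℕ) (h : j + 1 < n),
            i < j ∧ σ ⟨j, Nat.lt_of_succ_lt h⟩ < σ ⟨j + 1, h⟩} =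
      k * Nat.choose (n + k - 2) (n - 1) :=
  stmt8_general n k hn
end
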